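/- arXiv:1108.3097 — 2 statements merged into one kernel-verified Lean document; each statement's English description precedes it below -/
import Mathlib

section
/- Let x = (Δ_1,…,Δ_M, A) be an optimal solution with objective value T_opt to the LP defined by a decoding order 𝒯, and suppose Δ_m = 0 for some m ∈ {2,…,M}. Let 𝒯* be the decoding order obtained from 𝒯 by swapping the positions of the decoding events T_{m-1} and T_m. Then x is feasible for the LP defined by 𝒯*, and hence the optimal value T_opt* of the swapped LP satisfies T_opt* ≤ T_opt. -/
/-- Accumulated information at the node of decoding event `m` (node
`(ev m).1`, packet `(ev m).2`) by the time of event `m`: node `i`'s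
allocation `A i s c` in interval `s ≤ m` counts only if `i` decoded packet
`c` strictly before interval `s` began. -/
def accumulatedInfo {L N M : ℕ} (C : Fin L → Fin L → ℝ)
    (ev : Fin M → Fin L × Fin N)
    (A : Fin L → Fin M → Fin N → ℝ) (m : Fin M) : ℝ :=
  ∑ s ∈ Finset.univ.filter (fun s => s ≤ m),
    ∑ i ∈ Finset.univ.filter
        (fun i => ∃ s', s' < s ∧ ev s' = (i, (ev m).2)),
      A i s (ev m).2 * C i (ev m).1

/-- Feasibility for the LP defined by decoding order `ev`: nonnegativity,
per-node bandwidth constraints, and the decoding constraint of each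
decoding event other than source arrivals. -/
def FeasibleLP {L N M : ℕ} (C : Fin L → Fin L → ℝ) (B : Fin N → ℝ)
    (W : Fin L → ℝ) (src : Fin L) (ev : Fin M → Fin L × Fin N)
    (Δ : Fin M → ℝ) (A : Fin L → Fin M → Fin N → ℝ) : Prop :=
  (∀ s, 0 ≤ Δ s) ∧ (∀ i s c, 0 ≤ A i s c) ∧
  (∀ i s, ∑ c, A i s c ≤ Δ s * W i) ∧
  (∀ m, (ev m).1 ≠ src → B (ev m).2 ≤ accumulatedInfo C ev A m)

/-- Swapping adjacent events `k` and `m = k+1` leaves the accumulated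
information unchanged, up to relabelling of the event position, provided
the allocation in interval `m` is zero. -/
lemma acc_swap {L N M : ℕ} (C : Fin L → Fin L → ℝ)
    (ev : Fin M → Fin L × Fin N) (A : Fin L → Fin M → Fin N → ℝ)
    (k m : Fin M) (hkm : (k : ℕ) + 1 = (m : ℕ))
    (hA0 : ∀ i c, A i m c = 0) (m' : Fin M) :
    accumulatedInfo C (ev ∘ Equiv.swap k m) A m'
      = accumulatedInfo C ev A (Equiv.swap k m m') := by
  set σ := Equiv.swap k m with hσdef
  have hσk : σ k = m := Equiv.swap_apply_left k m
  have hσm : σ m = k := Equiv.swap_apply_right k m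
  have hσother : ∀ s : Fin M, s ≠ k → s ≠ m → σ s = s :=
    fun s h1 h2 => Equiv.swap_apply_of_ne_of_ne h1 h2
  have hkm' : k < m := by rw [Fin.lt_def]; omega
  -- swapping preserves being strictly below `s`, for `s ≠ m`
  have hswaplt : ∀ s s' : Fin M, s ≠ m → s' < s → σ s' < s := by
    intro s s' hsm hlt
    have hsmv : (s : ℕ) ≠ (m : ℕ) := fun h => hsm (Fin.ext h)
    rcases eq_or_ne s' k with rfl | h1
    · rw [hσk, Fin.lt_def] at *
      omega
    rcases eq_or_ne s' m with rfl | h2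
    · rw [hσm]; exact lt_trans hkm' hlt
    · rw [hσother s' h1 h2]; exact hlt
  unfold accumulatedInfo
  have hc2 : ((ev ∘ σ) m').2 = (ev (σ m')).2 := rfl
  have hc1 : ((ev ∘ σ) m').1 = (ev (σ m')).1 := rfl
  rw [hc1, hc2]
  set c := (ev (σ m')).2
  set j := (ev (σ m')).1
  -- the inner sums agree for every interval `s`
  have hinner : ∀ s : Fin M,
      (∑ i ∈ Finset.univ.filter
          (fun i => ∃ s', s' < s ∧ (ev ∘ σ) s' = (i, c)), A i s c * C i j)
        = ∑ i ∈ Finset.univ.filter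
          (fun i => ∃ s', s' < s ∧ ev s' = (i, c)), A i s c * C i j := by
    intro s
    by_cases hs : s = m
    · subst hs
      rw [Finset.sum_eq_zero, Finset.sum_eq_zero] <;>
        · intro i _; rw [hA0, zero_mul]
    · apply Finset.sum_congr _ (fun _ _ => rfl)
      ext i
      simp only [Finset.mem_filter, Finset.mem_univ, true_and, Function.comp]
      constructor
      · rintro ⟨s', hs', hev'⟩
        exact ⟨σ s', hswaplt s s' hs hs', hev'⟩
      · rintro ⟨s', hs', hev'⟩
        refine ⟨σ s', hswaplt s s' hs hs', ?_⟩
        rwa [Equiv.swap_apply_self]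
  simp only [hinner]
  -- now compare the outer ranges
  have houter0 : ∀ i ∈ Finset.univ.filter
      (fun i => ∃ s', s' < m ∧ ev s' = (i, c)), A i m c * C i j = 0 := by
    intro i _; rw [hA0, zero_mul]
  have hmem : m ∉ Finset.univ.filter (fun s : Fin M => s ≤ k) := by
    simp only [Finset.mem_filter, Finset.mem_univ, true_and, Fin.le_def]
    omega
  have hsplit : Finset.univ.filter (fun s : Fin M => s ≤ m)
      = insert m (Finset.univ.filter (fun s : Fin M => s ≤ k)) := by
    ext s
    simp only [Finset.mem_insert, Finset.mem_filter, Finset.mem_univ, true_and,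
      Fin.le_def, Fin.ext_iff]
    omega
  rcases eq_or_ne m' k with rfl | h1
  · rw [hσk, hsplit, Finset.sum_insert hmem,
      Finset.sum_eq_zero houter0, zero_add]
  rcases eq_or_ne m' m with rfl | h2
  · rw [hσm, hsplit, Finset.sum_insert hmem,
      Finset.sum_eq_zero houter0, zero_add]
  · rw [hσother m' h1 h2]

/-- Decoding-order swap theorem.  If `(Δ, A)` is an optimal solution with
value `T_opt = ∑ s, Δ s` for the LP of decoding order `ev` and `Δ m = 0`, then
swapping the decoding events at positions `m-1` and `m` keeps `(Δ, A)`
feasible, hence the optimal value of the swapped LP satisfies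
`T_opt* ≤ T_opt`. -/
theorem swap_decoding_order {L N M : ℕ}
    (C : Fin L → Fin L → ℝ) (hC : ∀ i j, 0 ≤ C i j)
    (B : Fin N → ℝ) (W : Fin L → ℝ) (hW : ∀ i, 0 < W i)
    (src : Fin L) (ev : Fin M → Fin L × Fin N)
    (hev : Function.Injective ev)
    (Δ : Fin M → ℝ) (A : Fin L → Fin M → Fin N → ℝ)
    (k m : Fin M) (hkm : (k : ℕ) + 1 = (m : ℕ))
    (hfeas : FeasibleLP C B W src ev Δ A)
    (hopt : ∀ (Δ' : Fin M → ℝ) (A' : Fin L → Fin M → Fin N → ℝ),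
      FeasibleLP C B W src ev Δ' A' → ∑ s, Δ s ≤ ∑ s, Δ' s)
    (hΔm : Δ m = 0) :
    FeasibleLP C B W src (ev ∘ Equiv.swap k m) Δ A ∧
    sInf {t : ℝ | ∃ (Δ' : Fin M → ℝ) (A' : Fin L → Fin M → Fin N → ℝ),
        FeasibleLP C B W src (ev ∘ Equiv.swap k m) Δ' A' ∧ t = ∑ s, Δ' s}
      ≤ ∑ s, Δ s := by
  obtain ⟨hΔ, hA, hBW, hdec⟩ := hfeas
  have hA0 : ∀ i c, A i m c = 0 := by
    intro i c
    have h1 : ∑ c, A i m c ≤ 0 := by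
      have := hBW i m; rwa [hΔm, zero_mul] at this
    have h2 : ∀ c ∈ Finset.univ, (0:ℝ) ≤ A i m c := fun c _ => hA i m c
    have hz : ∑ c, A i m c = 0 := le_antisymm h1 (Finset.sum_nonneg h2)
    exact (Finset.sum_eq_zero_iff_of_nonneg h2).mp hz c (Finset.mem_univ c)
  have hfeas' : FeasibleLP C B W src (ev ∘ Equiv.swap k m) Δ A := by
    refine ⟨hΔ, hA, hBW, ?_⟩
    intro m' hne
    rw [acc_swap C ev A k m hkm hA0 m']
    exact hdec (Equiv.swap k m m') hne
  refine ⟨hfeas', ?_⟩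
  apply csInf_le
  · refine ⟨0, ?_⟩
    rintro t ⟨Δ', A', hf', rfl⟩
    exact Finset.sum_nonneg fun s _ => hf'.1 s
  · exact ⟨Δ, A, hfeas', rfl⟩
end

section
/- Dropping a redundant decoding event cannot increase the optimum: let 𝒯 be a decoding order and let 𝒯' be obtained from 𝒯 by deleting a decoding event T_i^c (i ≠ 1, i ≠ L, destination already decoded packet c before position of T_i^c in 𝒯' ordering, i.e., the deleted event occurred at the same time as the destination's decoding of packet c with Δ = 0 between them). If (Δ, A) is optimal for the LP on 𝒯 with Δ at the deleted event's position equal to 0, then (Δ with that zero entry removed, A with the corresponding interval's allocations removed) is feasible for the LP on 𝒯', so the optimal value on 𝒯' is at most that on 𝒯. -/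
/-- Dropping a redundant decoding event cannot increase the optimum.  Let
`(Δ, A)` be optimal for the LP on decoding order `ev` (of length `M+1`), and
let the event at position `p` be a relay event (`≠` source, `≠` destination)
occurring at the same time as the destination's decoding of the same packet,
i.e. the destination decoded that packet at an earlier position, `Δ p = 0`,
and no event after `p` concerns that packet.  Then deleting position `p`
(via `p.succAbove`) gives a feasible point of the LP on the shortened order
with the same objective value, so the optimal value of the shortened LP is at
most that of the original. -/
theorem drop_decoding_event {L N M : ℕ}
    (C : Fin L → Fin L → ℝ) (hC : ∀ i j, 0 ≤ C i j)
    (B : Fin N → ℝ) (W : Fin L → ℝ) (hW : ∀ i, 0 < W i)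
    (src dest : Fin L)
    (ev : Fin (M + 1) → Fin L × Fin N) (hev : Function.Injective ev)
    (Δ : Fin (M + 1) → ℝ) (A : Fin L → Fin (M + 1) → Fin N → ℝ)
    (p : Fin (M + 1))
    (hfeas : FeasibleLP C B W src ev Δ A)
    (hopt : ∀ (Δ' : Fin (M + 1) → ℝ) (A' : Fin L → Fin (M + 1) → Fin N → ℝ),
      FeasibleLP C B W src ev Δ' A' → ∑ s, Δ s ≤ ∑ s, Δ' s)
    (hΔp : Δ p = 0)
    (hnsrc : (ev p).1 ≠ src) (hndest : (ev p).1 ≠ dest)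
    (hdestBefore : ∃ s, s < p ∧ ev s = (dest, (ev p).2))
    (hlast : ∀ s, p < s → (ev s).2 ≠ (ev p).2) :
    FeasibleLP C B W src (fun s => ev (p.succAbove s))
      (fun s => Δ (p.succAbove s)) (fun i s c => A i (p.succAbove s) c) ∧
    (∑ s : Fin M, Δ (p.succAbove s) = ∑ s, Δ s) ∧
    sInf {t : ℝ | ∃ (Δ' : Fin M → ℝ) (A' : Fin L → Fin M → Fin N → ℝ),
        FeasibleLP C B W src (fun s => ev (p.succAbove s)) Δ' A' ∧
        t = ∑ s, Δ' s}
      ≤ ∑ s, Δ s := by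
  obtain ⟨hΔ, hA, hBW, hdec⟩ := hfeas
  have hA0 : ∀ i c, A i p c = 0 := by
    intro i c
    have h1 : ∑ c, A i p c ≤ 0 := by simpa [hΔp] using hBW i p
    have h2 : ∑ c, A i p c = 0 :=
      le_antisymm h1 (Finset.sum_nonneg fun c _ => hA i p c)
    exact (Finset.sum_eq_zero_iff_of_nonneg (fun c _ => hA i p c)).mp h2 c
      (Finset.mem_univ c)
  have hmono := Fin.strictMono_succAbove p
  have hsum : ∑ s : Fin M, Δ (p.succAbove s) = ∑ s, Δ s := by
    rw [Fin.sum_univ_succAbove Δ p, hΔp, zero_add]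
  have hacc : ∀ m : Fin M,
      accumulatedInfo C (fun s => ev (p.succAbove s))
        (fun i s c => A i (p.succAbove s) c) m
        = accumulatedInfo C ev A (p.succAbove m) := by
    intro m
    simp only [accumulatedInfo]
    rw [Finset.sum_filter (s := (Finset.univ : Finset (Fin (M + 1))))
      (p := fun t => t ≤ p.succAbove m),
      Fin.sum_univ_succAbove (fun t => if t ≤ p.succAbove m then
        ∑ i ∈ Finset.univ.filter
            (fun i => ∃ t', t' < t ∧ ev t' = (i, (ev (p.succAbove m)).2)),
          A i t (ev (p.succAbove m)).2 * C i (ev (p.succAbove m)).1 else 0) p]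
    have hFp : (∑ i ∈ Finset.univ.filter
        (fun i => ∃ t', t' < p ∧ ev t' = (i, (ev (p.succAbove m)).2)),
        A i p (ev (p.succAbove m)).2 * C i (ev (p.succAbove m)).1) = 0 := by
      refine Finset.sum_eq_zero fun i _ => ?_
      rw [hA0, zero_mul]
    rw [hFp, ite_self, zero_add]
    have hle : ∀ s : Fin M, (p.succAbove s ≤ p.succAbove m) = (s ≤ m) :=
      fun s => propext hmono.le_iff_le
    simp only [hle]
    rw [← Finset.sum_filter]
    refine Finset.sum_congr rfl fun s hs => ?_
    have hsm : s ≤ m := (Finset.mem_filter.mp hs).2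
    congr 1
    ext i
    simp only [Finset.mem_filter, Finset.mem_univ, true_and]
    constructor
    · rintro ⟨s', hs', he⟩
      exact ⟨p.succAbove s', hmono hs', he⟩
    · rintro ⟨t', ht', he⟩
      have htp : t' ≠ p := by
        intro h
        rw [h] at ht' he
        have hc : (ev (p.succAbove m)).2 = (ev p).2 := by rw [he]
        rcases lt_or_gt_of_ne (Fin.succAbove_ne p m) with h1 | h1
        · exact absurd (lt_trans (lt_of_lt_of_le ht' (hmono.le_iff_le.mpr hsm)) h1)
            (lt_irrefl _)
        · exact hlast (p.succAbove m) h1 hc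
      obtain ⟨s', rfl⟩ := Fin.exists_succAbove_eq htp
      exact ⟨s', hmono.lt_iff_lt.mp ht', he⟩
  refine ⟨⟨fun s => hΔ _, fun i s c => hA _ _ _, fun i s => hBW _ _,
    fun m hm => ?_⟩, hsum, ?_⟩
  · rw [hacc m]
    exact hdec (p.succAbove m) hm
  · refine csInf_le ⟨0, ?_⟩ ?_
    · rintro t ⟨Δ', A', hf, rfl⟩
      exact Finset.sum_nonneg fun s _ => hf.1 s
    · exact ⟨fun s => Δ (p.succAbove s), fun i s c => A i (p.succAbove s) c,
        ⟨fun s => hΔ _, fun i s c => hA _ _ _, fun i s => hBW _ _,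
          fun m hm => by rw [hacc m]; exact hdec (p.succAbove m) hm⟩,
        hsum.symm⟩
end
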